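/- For every n ≥ 1, every orbit of K-promotion ∂_K acting on L_{n+2}(Z_n) has size lcm(1, 2, …, n). -/

import Mathlib

/-- An `m`-packed labeling of a poset: strictly increasing along the order,
with image exactly `{1, …, m}`. -/
def IsPacked {α : Type*} [PartialOrder α] (m : ℕ) (L : α → ℕ) : Prop :=
  (∀ x y : α, x < y → L x < L y) ∧ Set.range L = Set.Icc 1 m

open Classical in
/-- The `i`-th K-promotion toggle `s_i` on labelings. -/
noncomputable def sTog {α : Type*} [PartialOrder α] [DecidableEq α] (m i : ℕ)
    (L : α → ℕ) : α → ℕ := fun x =>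
  if L x = i ∧ IsPacked m (Function.update L x (i + 1)) then i + 1
  else if L x = i + 1 ∧ IsPacked m (Function.update L x i) then i
  else L x

/-- K-promotion `∂_K = s_{m-1} ∘ ⋯ ∘ s_1`. -/
noncomputable def promK {α : Type*} [PartialOrder α] [DecidableEq α] (m : ℕ)
    (L : α → ℕ) : α → ℕ :=
  (List.range (m - 1)).foldl (fun M i => sTog m (i + 1) M) L

/-- The orbit of a labeling under K-promotion. -/
def promOrbit {α : Type*} [PartialOrder α] [DecidableEq α] (m : ℕ) (L : α → ℕ) :
    Set (α → ℕ) :=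
  {M | ∃ j : ℕ, (promK m)^[j] L = M}

/-- The set of orbits of K-promotion on the `m`-packed labelings. -/
def promOrbits (α : Type*) [PartialOrder α] [DecidableEq α] (m : ℕ) :
    Set (Set (α → ℕ)) :=
  {O | ∃ L : α → ℕ, IsPacked m L ∧ O = promOrbit m L}

/-- The order of K-promotion acting on the `m`-packed labelings: the least
`d ≥ 1` with `∂_K^d = id` on `L_m(P)`. -/
noncomputable def promOrder (α : Type*) [PartialOrder α] [DecidableEq α] (m : ℕ) : ℕ :=
  sInf {d : ℕ | 0 < d ∧ ∀ L : α → ℕ, IsPacked m L → (promK m)^[d] L = L}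

/-- The height of a finite poset: the length of a longest chain. -/
noncomputable def pHeight (α : Type*) [PartialOrder α] : ℕ :=
  sSup {n : ℕ | ∃ f : Fin (n + 1) → α, StrictMono f}

/-- A branch (on `k` vertices) of a poset with minimum element `bot`:
a connected component of the Hasse diagram of `P − {bot}` that is a chain
`x 0 ⋖ x 1 ⋖ ⋯ ⋖ x (k-1)`. -/
def IsBranch {α : Type*} [PartialOrder α] (bot : α) {k : ℕ} (x : Fin k → α) : Prop :=
  StrictMono x ∧
  (∀ i j : Fin k, (i : ℕ) + 1 = (j : ℕ) → x i ⋖ x j) ∧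
  (∀ i, x i ≠ bot) ∧
  (∀ y : α, y ∉ Set.range x → y ≠ bot → ∀ i, ¬ x i ≤ y ∧ ¬ y ≤ x i)

/-- A chain `⊥ = x 0 ⋖ x 1 ⋖ ⋯` in which every element is covered by exactly
one element of the ambient poset. -/
def IsTrunkChain {α : Type*} [PartialOrder α] [OrderBot α] {t : ℕ} (x : Fin t → α) : Prop :=
  (∀ h : 0 < t, x ⟨0, h⟩ = ⊥) ∧
  (∀ i j : Fin t, (i : ℕ) + 1 = (j : ℕ) → x i ⋖ x j) ∧
  (∀ i : Fin t, ∃! y, x i ⋖ y)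

/-- The trunk: a longest such chain. -/
def IsTrunk {α : Type*} [PartialOrder α] [OrderBot α] {t : ℕ} (x : Fin t → α) : Prop :=
  IsTrunkChain x ∧ ∀ (t' : ℕ) (x' : Fin t' → α), IsTrunkChain x' → t' ≤ t

/-- The comb `C_n`: `Sum.inl i` are the spine elements `x_1 < ⋯ < x_n` and
`Sum.inr i` is the tooth `y_i` covering `x_i` (hence above `x_j` for `j ≤ i`)
and maximal. -/
def Comb (n : ℕ) : Type := Fin n ⊕ Fin n

namespace Comb

/-- The order of the comb. -/
def cle {n : ℕ} : Comb n → Comb n → Prop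
  | Sum.inl i, Sum.inl j => (i : ℕ) ≤ (j : ℕ)
  | Sum.inl i, Sum.inr j => (i : ℕ) ≤ (j : ℕ)
  | Sum.inr i, Sum.inr j => i = j
  | Sum.inr _, Sum.inl _ => False

instance (n : ℕ) : PartialOrder (Comb n) where
  le := cle
  le_refl a := by cases a <;> simp [cle]
  le_trans a b c hab hbc := by
    cases a <;> cases b <;> cases c <;> simp_all [cle] <;> omega
  le_antisymm a b hab hba := by
    cases a <;> cases b <;> simp_all [cle]
    exact congrArg Sum.inl (Fin.ext (le_antisymm hab hba))
    all_goals (subst hab; rfl)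

instance (n : ℕ) : DecidableEq (Comb n) :=
  inferInstanceAs (DecidableEq (Fin n ⊕ Fin n))

instance (n : ℕ) : Fintype (Comb n) :=
  inferInstanceAs (Fintype (Fin n ⊕ Fin n))

end Comb

/-- The zipper `Z_n = C_n ⋃̂ C_n`: two disjoint combs with a new minimum
element adjoined below both. -/
abbrev Zipper (n : ℕ) : Type := WithBot (Comb n ⊕ Comb n)

namespace ZOS

variable {n : ℕ}

/-- spine / tooth elements of the comb, with the correct `Comb` type. -/
def cx (i : Fin n) : Comb n := Sum.inl i
def cy (i : Fin n) : Comb n := Sum.inr i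

/-- the four families of non-bottom elements of the zipper -/
def xA (i : Fin n) : Zipper n := (↑(Sum.inl (cx i) : Comb n ⊕ Comb n) : Zipper n)
def yA (i : Fin n) : Zipper n := (↑(Sum.inl (cy i) : Comb n ⊕ Comb n) : Zipper n)
def xB (i : Fin n) : Zipper n := (↑(Sum.inr (cx i) : Comb n ⊕ Comb n) : Zipper n)
def yB (i : Fin n) : Zipper n := (↑(Sum.inr (cy i) : Comb n ⊕ Comb n) : Zipper n)

lemma zcases (z : Zipper n) :
    z = ⊥ ∨ (∃ i, z = xA i) ∨ (∃ i, z = yA i) ∨ (∃ i, z = xB i) ∨ (∃ i, z = yB i) := by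
  induction z using WithBot.recBotCoe with
  | bot => exact Or.inl rfl
  | coe a =>
    rcases a with (i|i)|(i|i)
    · exact Or.inr (Or.inl ⟨i, rfl⟩)
    · exact Or.inr (Or.inr (Or.inl ⟨i, rfl⟩))
    · exact Or.inr (Or.inr (Or.inr (Or.inl ⟨i, rfl⟩)))
    · exact Or.inr (Or.inr (Or.inr (Or.inr ⟨i, rfl⟩)))

lemma cx_lt_cx {i j : Fin n} : cx i < cx j ↔ (i:ℕ) < (j:ℕ) := by
  rw [lt_iff_le_not_ge]
  show ((i:ℕ) ≤ j ∧ ¬ (j:ℕ) ≤ i) ↔ _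
  omega

lemma cx_lt_cy {i j : Fin n} : cx i < cy j ↔ (i:ℕ) ≤ (j:ℕ) := by
  rw [lt_iff_le_not_ge]
  show ((i:ℕ) ≤ j ∧ ¬ False) ↔ _
  tauto

lemma not_cy_lt (i : Fin n) (c : Comb n) : ¬ cy i < c := by
  rw [lt_iff_le_not_ge]
  rcases c with j | j
  · show ¬ (False ∧ _); tauto
  · show ¬ ((i = j) ∧ ¬ (j = i)); tauto

-- lt characterizations on the zipper
lemma xA_lt_xA {i j : Fin n} : xA i < xA j ↔ (i:ℕ) < (j:ℕ) := by
  rw [xA, xA, WithBot.coe_lt_coe, Sum.inl_lt_inl_iff, cx_lt_cx]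
lemma xA_lt_yA {i j : Fin n} : xA i < yA j ↔ (i:ℕ) ≤ (j:ℕ) := by
  rw [xA, yA, WithBot.coe_lt_coe, Sum.inl_lt_inl_iff, cx_lt_cy]
lemma xB_lt_xB {i j : Fin n} : xB i < xB j ↔ (i:ℕ) < (j:ℕ) := by
  rw [xB, xB, WithBot.coe_lt_coe, Sum.inr_lt_inr_iff, cx_lt_cx]
lemma xB_lt_yB {i j : Fin n} : xB i < yB j ↔ (i:ℕ) ≤ (j:ℕ) := by
  rw [xB, yB, WithBot.coe_lt_coe, Sum.inr_lt_inr_iff, cx_lt_cy]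
lemma bot_lt_xA (i : Fin n) : (⊥ : Zipper n) < xA i := WithBot.bot_lt_coe _
lemma bot_lt_yA (i : Fin n) : (⊥ : Zipper n) < yA i := WithBot.bot_lt_coe _
lemma bot_lt_xB (i : Fin n) : (⊥ : Zipper n) < xB i := WithBot.bot_lt_coe _
lemma bot_lt_yB (i : Fin n) : (⊥ : Zipper n) < yB i := WithBot.bot_lt_coe _
lemma not_yA_lt_xA {i j : Fin n} : ¬ yA i < xA j := by
  rw [yA, xA, WithBot.coe_lt_coe, Sum.inl_lt_inl_iff]; exact not_cy_lt _ _
lemma not_yA_lt_yA {i j : Fin n} : ¬ yA i < yA j := by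
  rw [yA, yA, WithBot.coe_lt_coe, Sum.inl_lt_inl_iff]; exact not_cy_lt _ _
lemma not_yB_lt_xB {i j : Fin n} : ¬ yB i < xB j := by
  rw [yB, xB, WithBot.coe_lt_coe, Sum.inr_lt_inr_iff]; exact not_cy_lt _ _
lemma not_yB_lt_yB {i j : Fin n} : ¬ yB i < yB j := by
  rw [yB, yB, WithBot.coe_lt_coe, Sum.inr_lt_inr_iff]; exact not_cy_lt _ _
lemma not_A_lt_B {c d : Comb n} : ¬ ((↑(Sum.inl c : Comb n ⊕ Comb n) : Zipper n) < ↑(Sum.inr d : Comb n ⊕ Comb n)) := by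
  rw [WithBot.coe_lt_coe]; exact Sum.not_inl_lt_inr
lemma not_B_lt_A {c d : Comb n} : ¬ ((↑(Sum.inr c : Comb n ⊕ Comb n) : Zipper n) < ↑(Sum.inl d : Comb n ⊕ Comb n)) := by
  rw [WithBot.coe_lt_coe]; exact fun h => Sum.not_inr_le_inl h.le

/-- Characterization of packed labelings of the zipper. -/
def Good (n : ℕ) (L : Zipper n → ℕ) : Prop :=
  L ⊥ = 1 ∧
  (∀ i : Fin n, L (xA i) = (i:ℕ) + 2) ∧
  (∀ i : Fin n, L (xB i) = (i:ℕ) + 2) ∧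
  (∀ i : Fin n, (i:ℕ) + 3 ≤ L (yA i) ∧ L (yA i) ≤ n + 2) ∧
  (∀ i : Fin n, (i:ℕ) + 3 ≤ L (yB i) ∧ L (yB i) ≤ n + 2)

lemma good_mono {L : Zipper n → ℕ} (hL : Good n L) :
    ∀ z w : Zipper n, z < w → L z < L w := by
  obtain ⟨h0, hsl, hsr, htl, htr⟩ := hL
  intro z w hzw
  rcases zcases z with rfl | ⟨i, rfl⟩ | ⟨i, rfl⟩ | ⟨i, rfl⟩ | ⟨i, rfl⟩ <;>
    rcases zcases w with rfl | ⟨j, rfl⟩ | ⟨j, rfl⟩ | ⟨j, rfl⟩ | ⟨j, rfl⟩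
  · exact absurd hzw (lt_irrefl _)
  · have := hsl j; omega
  · have := htl j; omega
  · have := hsr j; omega
  · have := htr j; omega
  · exact absurd hzw (WithBot.not_lt_bot _)
  · have hij := xA_lt_xA.mp hzw; have := hsl i; have := hsl j; omega
  · have hij := xA_lt_yA.mp hzw; have := hsl i; have := htl j; omega
  · exact absurd hzw not_A_lt_B
  · exact absurd hzw not_A_lt_B
  · exact absurd hzw (WithBot.not_lt_bot _)
  · exact absurd hzw not_yA_lt_xA
  · exact absurd hzw not_yA_lt_yA
  · exact absurd hzw not_A_lt_B
  · exact absurd hzw not_A_lt_B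
  · exact absurd hzw (WithBot.not_lt_bot _)
  · exact absurd hzw not_B_lt_A
  · exact absurd hzw not_B_lt_A
  · have hij := xB_lt_xB.mp hzw; have := hsr i; have := hsr j; omega
  · have hij := xB_lt_yB.mp hzw; have := hsr i; have := htr j; omega
  · exact absurd hzw (WithBot.not_lt_bot _)
  · exact absurd hzw not_B_lt_A
  · exact absurd hzw not_B_lt_A
  · exact absurd hzw not_yB_lt_xB
  · exact absurd hzw not_yB_lt_yB

lemma good_range (hn : 1 ≤ n) {L : Zipper n → ℕ} (hL : Good n L) :
    Set.range L = Set.Icc 1 (n + 2) := by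
  obtain ⟨h0, hsl, hsr, htl, htr⟩ := hL
  ext v
  simp only [Set.mem_range, Set.mem_Icc]
  constructor
  · rintro ⟨z, rfl⟩
    rcases zcases z with rfl | ⟨i, rfl⟩ | ⟨i, rfl⟩ | ⟨i, rfl⟩ | ⟨i, rfl⟩
    · omega
    · have := hsl i; have := i.isLt; omega
    · have := htl i; omega
    · have := hsr i; have := i.isLt; omega
    · have := htr i; omega
  · rintro ⟨h1, h2⟩
    by_cases hv1 : v = 1
    · exact ⟨⊥, by omega⟩
    by_cases hv2 : v ≤ n + 1
    · refine ⟨xA ⟨v - 2, by omega⟩, ?_⟩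
      have h3 : L (xA ⟨v - 2, by omega⟩) = v - 2 + 2 := hsl ⟨v - 2, by omega⟩
      omega
    · refine ⟨yA ⟨n - 1, by omega⟩, ?_⟩
      have h3 : n - 1 + 3 ≤ L (yA ⟨n - 1, by omega⟩) ∧ L (yA ⟨n - 1, by omega⟩) ≤ n + 2 :=
        htl ⟨n - 1, by omega⟩
      omega

lemma packed_good (hn : 1 ≤ n) {L : Zipper n → ℕ} (hL : IsPacked (n + 2) L) : Good n L := by
  obtain ⟨mono, rng⟩ := hL
  have hub : ∀ z : Zipper n, 1 ≤ L z ∧ L z ≤ n + 2 := by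
    intro z
    have : L z ∈ Set.Icc 1 (n + 2) := rng ▸ Set.mem_range_self z
    simpa using this
  have key : ∀ j : Comb n → Comb n ⊕ Comb n,
      (∀ c c' : Comb n, c < c' → ((↑(j c) : Zipper n) < (↑(j c') : Zipper n))) →
      (∀ i : Fin n, L ↑(j (cx i)) = (i:ℕ) + 2) ∧
      (∀ i : Fin n, (i:ℕ) + 3 ≤ L ↑(j (cy i)) ∧ L ↑(j (cy i)) ≤ n + 2) := by
    intro j hj
    have lb : ∀ k : ℕ, ∀ h : k < n, k + 2 ≤ L ↑(j (cx ⟨k, h⟩)) := by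
      intro k
      induction k with
      | zero =>
        intro h
        have h1 := mono ⊥ ↑(j (cx ⟨0, h⟩)) (WithBot.bot_lt_coe _)
        have := hub (⊥ : Zipper n)
        omega
      | succ k ih =>
        intro h
        have hk : k < n := by omega
        have hlt : cx (⟨k, hk⟩ : Fin n) < cx ⟨k + 1, h⟩ := by rw [cx_lt_cx]; simp
        have h1 := mono _ _ (hj _ _ hlt)
        have := ih hk
        omega
    have ub : ∀ d k : ℕ, ∀ h : k < n, k + d = n - 1 → L ↑(j (cx ⟨k, h⟩)) ≤ k + 2 := by
      intro d
      induction d with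
      | zero =>
        intro k h hk
        have hlt : cx (⟨k, h⟩ : Fin n) < cy ⟨k, h⟩ := by rw [cx_lt_cy]
        have h1 := mono _ _ (hj _ _ hlt)
        have h2 := hub (↑(j (cy ⟨k, h⟩)))
        omega
      | succ d ih =>
        intro k h hk
        have hk1 : k + 1 < n := by omega
        have hlt : cx (⟨k, h⟩ : Fin n) < cx ⟨k + 1, hk1⟩ := by rw [cx_lt_cx]; simp
        have h1 := mono _ _ (hj _ _ hlt)
        have h2 := ih (k + 1) hk1 (by omega)
        omega
    constructor
    · intro i
      have h1 := lb i i.isLt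
      have h2 := ub (n - 1 - (i:ℕ)) i i.isLt (by have := i.isLt; omega)
      have hi : (⟨(i:ℕ), i.isLt⟩ : Fin n) = i := by ext; rfl
      rw [hi] at h1 h2
      omega
    · intro i
      have hlt : cx i < cy i := by rw [cx_lt_cy]
      have h1 := mono _ _ (hj _ _ hlt)
      have h2 := hub (↑(j (cy i)))
      have h3 := lb i i.isLt
      have hi : (⟨(i:ℕ), i.isLt⟩ : Fin n) = i := by ext; rfl
      rw [hi] at h3
      omega
  have keyA := key Sum.inl (fun c c' h => WithBot.coe_lt_coe.mpr (Sum.inl_lt_inl_iff.mpr h))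
  have keyB := key Sum.inr (fun c c' h => WithBot.coe_lt_coe.mpr (Sum.inr_lt_inr_iff.mpr h))
  have hbot : L ⊥ = 1 := by
    have h1 : L ⊥ < L (xA ⟨0, hn⟩) := mono _ _ (bot_lt_xA ⟨0, hn⟩)
    have h2 : L (xA ⟨0, hn⟩) = 0 + 2 := keyA.1 ⟨0, hn⟩
    have := hub (⊥ : Zipper n)
    omega
  exact ⟨hbot, keyA.1, keyB.1, keyA.2, keyB.2⟩

lemma good_iff (hn : 1 ≤ n) {L : Zipper n → ℕ} :
    IsPacked (n + 2) L ↔ Good n L :=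
  ⟨packed_good hn, fun h => ⟨good_mono h, good_range hn h⟩⟩

-- ne lemmas for Function.update
lemma bot_ne_yA {i : Fin n} : (⊥ : Zipper n) ≠ yA i := by simp [yA]
lemma bot_ne_yB {i : Fin n} : (⊥ : Zipper n) ≠ yB i := by simp [yB]
lemma xA_ne_yA {j i : Fin n} : xA j ≠ yA i := by simp [xA, yA, cx, cy]; intro h; cases h
lemma xB_ne_yA {j i : Fin n} : xB j ≠ yA i := by simp [xB, yA, cx, cy]
lemma yB_ne_yA {j i : Fin n} : yB j ≠ yA i := by simp [yB, yA, cx, cy]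
lemma xA_ne_yB {j i : Fin n} : xA j ≠ yB i := by simp [xA, yB, cx, cy]
lemma xB_ne_yB {j i : Fin n} : xB j ≠ yB i := by simp [xB, yB, cx, cy]; intro h; cases h
lemma yA_ne_yB {j i : Fin n} : yA j ≠ yB i := by simp [yA, yB, cx, cy]
lemma yA_inj {j i : Fin n} : yA j = yA i ↔ j = i := by
  simp only [yA, cy, WithBot.coe_inj]
  exact ⟨fun h => by cases h; rfl, fun h => by rw [h]⟩
lemma yB_inj {j i : Fin n} : yB j = yB i ↔ j = i := by
  simp only [yB, cy, WithBot.coe_inj]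
  exact ⟨fun h => by cases h; rfl, fun h => by rw [h]⟩

lemma good_update_yA {L : Zipper n → ℕ} (hL : Good n L) (i : Fin n) (v : ℕ) :
    Good n (Function.update L (yA i) v) ↔ ((i:ℕ) + 3 ≤ v ∧ v ≤ n + 2) := by
  obtain ⟨h0, hsl, hsr, htl, htr⟩ := hL
  constructor
  · intro hG
    have := hG.2.2.2.1 i
    rwa [Function.update_self] at this
  · rintro ⟨hv1, hv2⟩
    refine ⟨?_, ?_, ?_, ?_, ?_⟩
    · rw [Function.update_of_ne bot_ne_yA]; exact h0
    · intro j; rw [Function.update_of_ne xA_ne_yA]; exact hsl j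
    · intro j; rw [Function.update_of_ne xB_ne_yA]; exact hsr j
    · intro j
      by_cases hji : j = i
      · subst hji; rw [Function.update_self]; exact ⟨hv1, hv2⟩
      · rw [Function.update_of_ne (fun h => hji (yA_inj.mp h))]; exact htl j
    · intro j; rw [Function.update_of_ne yB_ne_yA]; exact htr j

lemma good_update_yB {L : Zipper n → ℕ} (hL : Good n L) (i : Fin n) (v : ℕ) :
    Good n (Function.update L (yB i) v) ↔ ((i:ℕ) + 3 ≤ v ∧ v ≤ n + 2) := by
  obtain ⟨h0, hsl, hsr, htl, htr⟩ := hL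
  constructor
  · intro hG
    have := hG.2.2.2.2 i
    rwa [Function.update_self] at this
  · rintro ⟨hv1, hv2⟩
    refine ⟨?_, ?_, ?_, ?_, ?_⟩
    · rw [Function.update_of_ne bot_ne_yB]; exact h0
    · intro j; rw [Function.update_of_ne xA_ne_yB]; exact hsl j
    · intro j; rw [Function.update_of_ne xB_ne_yB]; exact hsr j
    · intro j; rw [Function.update_of_ne yA_ne_yB]; exact htl j
    · intro j
      by_cases hji : j = i
      · subst hji; rw [Function.update_self]; exact ⟨hv1, hv2⟩
      · rw [Function.update_of_ne (fun h => hji (yB_inj.mp h))]; exact htr j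

-- computation of the toggles on good labelings
lemma sTog_bot (hn : 1 ≤ n) {L : Zipper n → ℕ} (hL : Good n L) {k : ℕ} (hk : 1 ≤ k) :
    sTog (n + 2) k L ⊥ = 1 := by
  have h0 := hL.1
  simp only [sTog]
  rw [if_neg, if_neg]
  · exact h0
  · rintro ⟨he, hp⟩
    have := ((good_iff hn).mp hp).1
    rw [Function.update_self] at this
    omega
  · rintro ⟨he, hp⟩
    have := ((good_iff hn).mp hp).1
    rw [Function.update_self] at this
    omega

lemma sTog_xA (hn : 1 ≤ n) {L : Zipper n → ℕ} (hL : Good n L) {k : ℕ} (i : Fin n) :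
    sTog (n + 2) k L (xA i) = (i:ℕ) + 2 := by
  have h0 := hL.2.1 i
  simp only [sTog]
  rw [if_neg, if_neg]
  · exact h0
  · rintro ⟨he, hp⟩
    have := ((good_iff hn).mp hp).2.1 i
    rw [Function.update_self] at this
    omega
  · rintro ⟨he, hp⟩
    have := ((good_iff hn).mp hp).2.1 i
    rw [Function.update_self] at this
    omega

lemma sTog_xB (hn : 1 ≤ n) {L : Zipper n → ℕ} (hL : Good n L) {k : ℕ} (i : Fin n) :
    sTog (n + 2) k L (xB i) = (i:ℕ) + 2 := by
  have h0 := hL.2.2.1 i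
  simp only [sTog]
  rw [if_neg, if_neg]
  · exact h0
  · rintro ⟨he, hp⟩
    have := ((good_iff hn).mp hp).2.2.1 i
    rw [Function.update_self] at this
    omega
  · rintro ⟨he, hp⟩
    have := ((good_iff hn).mp hp).2.2.1 i
    rw [Function.update_self] at this
    omega

/-- abstract toggle on a tooth value -/
def togT (n k i a : ℕ) : ℕ :=
  if a = k ∧ k + 1 ≤ n + 2 then k + 1 else if a = k + 1 ∧ i + 3 ≤ k then k else a

lemma sTog_yA (hn : 1 ≤ n) {L : Zipper n → ℕ} (hL : Good n L) {k : ℕ} (i : Fin n) :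
    sTog (n + 2) k L (yA i) = togT n k (i:ℕ) (L (yA i)) := by
  have hb := hL.2.2.2.1 i
  have c1 : (L (yA i) = k ∧ IsPacked (n + 2) (Function.update L (yA i) (k + 1))) ↔
      (L (yA i) = k ∧ k + 1 ≤ n + 2) := by
    constructor
    · rintro ⟨he, hp⟩
      exact ⟨he, ((good_update_yA hL i _).mp ((good_iff hn).mp hp)).2⟩
    · rintro ⟨he, hc⟩
      exact ⟨he, (good_iff hn).mpr ((good_update_yA hL i _).mpr ⟨by omega, hc⟩)⟩
  have c2 : (L (yA i) = k + 1 ∧ IsPacked (n + 2) (Function.update L (yA i) k)) ↔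
      (L (yA i) = k + 1 ∧ (i:ℕ) + 3 ≤ k) := by
    constructor
    · rintro ⟨he, hp⟩
      exact ⟨he, ((good_update_yA hL i _).mp ((good_iff hn).mp hp)).1⟩
    · rintro ⟨he, hc⟩
      exact ⟨he, (good_iff hn).mpr ((good_update_yA hL i _).mpr ⟨hc, by omega⟩)⟩
  simp only [sTog, togT]
  by_cases h1 : L (yA i) = k ∧ k + 1 ≤ n + 2
  · rw [if_pos (c1.mpr h1), if_pos h1]
  · rw [if_neg (fun hc => h1 (c1.mp hc)), if_neg h1]
    by_cases h2 : L (yA i) = k + 1 ∧ (i:ℕ) + 3 ≤ k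
    · rw [if_pos (c2.mpr h2), if_pos h2]
    · rw [if_neg (fun hc => h2 (c2.mp hc)), if_neg h2]

lemma sTog_yB (hn : 1 ≤ n) {L : Zipper n → ℕ} (hL : Good n L) {k : ℕ} (i : Fin n) :
    sTog (n + 2) k L (yB i) = togT n k (i:ℕ) (L (yB i)) := by
  have hb := hL.2.2.2.2 i
  have c1 : (L (yB i) = k ∧ IsPacked (n + 2) (Function.update L (yB i) (k + 1))) ↔
      (L (yB i) = k ∧ k + 1 ≤ n + 2) := by
    constructor
    · rintro ⟨he, hp⟩
      exact ⟨he, ((good_update_yB hL i _).mp ((good_iff hn).mp hp)).2⟩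
    · rintro ⟨he, hc⟩
      exact ⟨he, (good_iff hn).mpr ((good_update_yB hL i _).mpr ⟨by omega, hc⟩)⟩
  have c2 : (L (yB i) = k + 1 ∧ IsPacked (n + 2) (Function.update L (yB i) k)) ↔
      (L (yB i) = k + 1 ∧ (i:ℕ) + 3 ≤ k) := by
    constructor
    · rintro ⟨he, hp⟩
      exact ⟨he, ((good_update_yB hL i _).mp ((good_iff hn).mp hp)).1⟩
    · rintro ⟨he, hc⟩
      exact ⟨he, (good_iff hn).mpr ((good_update_yB hL i _).mpr ⟨hc, by omega⟩)⟩
  simp only [sTog, togT]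
  by_cases h1 : L (yB i) = k ∧ k + 1 ≤ n + 2
  · rw [if_pos (c1.mpr h1), if_pos h1]
  · rw [if_neg (fun hc => h1 (c1.mp hc)), if_neg h1]
    by_cases h2 : L (yB i) = k + 1 ∧ (i:ℕ) + 3 ≤ k
    · rw [if_pos (c2.mpr h2), if_pos h2]
    · rw [if_neg (fun hc => h2 (c2.mp hc)), if_neg h2]

/-- tooth value after the first `k` toggles of a promotion -/
def g (n k i t : ℕ) : ℕ :=
  if t = i + 3 then (if k < t then t else min (k + 1) (n + 2))
  else (if k < t - 1 then t else t - 1)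

lemma g_zero {i t : ℕ} (h1 : i + 3 ≤ t) : g n 0 i t = t := by
  unfold g; split_ifs <;> omega

lemma g_mem {k i t : ℕ} (h1 : i + 3 ≤ t) (h2 : t ≤ n + 2) :
    i + 3 ≤ g n k i t ∧ g n k i t ≤ n + 2 := by
  unfold g; split_ifs <;> omega

lemma g_step {k i t : ℕ} (h1 : i + 3 ≤ t) (h2 : t ≤ n + 2) :
    togT n (k + 1) i (g n k i t) = g n (k + 1) i t := by
  unfold g togT; split_ifs <;> omega

lemma g_final {i t : ℕ} (h1 : i + 3 ≤ t) (h2 : t ≤ n + 2) :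
    g n (n + 1) i t = if t = i + 3 then n + 2 else t - 1 := by
  unfold g; split_ifs <;> omega

/-- the state after the first `j` toggles of a promotion applied to `L` -/
noncomputable def stepFun (n : ℕ) (L : Zipper n → ℕ) (j : ℕ) : Zipper n → ℕ := fun z =>
  match z with
  | Option.none => 1
  | Option.some (Sum.inl (Sum.inl i)) => (i:ℕ) + 2
  | Option.some (Sum.inl (Sum.inr i)) => g n j (i:ℕ) (L (yA i))
  | Option.some (Sum.inr (Sum.inl i)) => (i:ℕ) + 2
  | Option.some (Sum.inr (Sum.inr i)) => g n j (i:ℕ) (L (yB i))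

lemma stepFun_bot {L : Zipper n → ℕ} {j : ℕ} : stepFun n L j ⊥ = 1 := rfl
lemma stepFun_xA {L : Zipper n → ℕ} {j : ℕ} {i : Fin n} : stepFun n L j (xA i) = (i:ℕ) + 2 := rfl
lemma stepFun_xB {L : Zipper n → ℕ} {j : ℕ} {i : Fin n} : stepFun n L j (xB i) = (i:ℕ) + 2 := rfl
lemma stepFun_yA {L : Zipper n → ℕ} {j : ℕ} {i : Fin n} :
    stepFun n L j (yA i) = g n j (i:ℕ) (L (yA i)) := rfl
lemma stepFun_yB {L : Zipper n → ℕ} {j : ℕ} {i : Fin n} :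
    stepFun n L j (yB i) = g n j (i:ℕ) (L (yB i)) := rfl

lemma good_stepFun {L : Zipper n → ℕ} (hL : Good n L) (j : ℕ) : Good n (stepFun n L j) := by
  refine ⟨stepFun_bot, fun i => stepFun_xA, fun i => stepFun_xB, fun i => ?_, fun i => ?_⟩
  · rw [stepFun_yA]
    exact g_mem (hL.2.2.2.1 i).1 (hL.2.2.2.1 i).2
  · rw [stepFun_yB]
    exact g_mem (hL.2.2.2.2 i).1 (hL.2.2.2.2 i).2

lemma stepFun_zero {L : Zipper n → ℕ} (hL : Good n L) : stepFun n L 0 = L := by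
  funext z
  rcases zcases z with rfl | ⟨i, rfl⟩ | ⟨i, rfl⟩ | ⟨i, rfl⟩ | ⟨i, rfl⟩
  · rw [stepFun_bot, hL.1]
  · rw [stepFun_xA, hL.2.1 i]
  · rw [stepFun_yA, g_zero (hL.2.2.2.1 i).1]
  · rw [stepFun_xB, hL.2.2.1 i]
  · rw [stepFun_yB, g_zero (hL.2.2.2.2 i).1]

lemma stepFun_succ (hn : 1 ≤ n) {L : Zipper n → ℕ} (hL : Good n L) (j : ℕ) :
    sTog (n + 2) (j + 1) (stepFun n L j) = stepFun n L (j + 1) := by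
  have hG := good_stepFun hL j
  funext z
  rcases zcases z with rfl | ⟨i, rfl⟩ | ⟨i, rfl⟩ | ⟨i, rfl⟩ | ⟨i, rfl⟩
  · rw [sTog_bot hn hG (by omega), stepFun_bot]
  · rw [sTog_xA hn hG i, stepFun_xA]
  · rw [sTog_yA hn hG i, stepFun_yA, stepFun_yA,
      g_step (hL.2.2.2.1 i).1 (hL.2.2.2.1 i).2]
  · rw [sTog_xB hn hG i, stepFun_xB]
  · rw [sTog_yB hn hG i, stepFun_yB, stepFun_yB,
      g_step (hL.2.2.2.2 i).1 (hL.2.2.2.2 i).2]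

lemma promK_good (hn : 1 ≤ n) {L : Zipper n → ℕ} (hL : Good n L) :
    promK (n + 2) L = stepFun n L (n + 1) := by
  have key : ∀ j : ℕ,
      (List.range j).foldl (fun M i => sTog (n + 2) (i + 1) M) L = stepFun n L j := by
    intro j
    induction j with
    | zero => rw [List.range_zero, List.foldl_nil, stepFun_zero hL]
    | succ j ih =>
      rw [List.range_succ, List.foldl_append, List.foldl_cons, List.foldl_nil, ih,
        stepFun_succ hn hL j]
  exact key (n + 1)

/-- tooth value after `d` full promotions -/
def rVal (n i d t : ℕ) : ℕ := i + 3 + ((t - (i + 3)) + d * (n - i - 1)) % (n - i)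

lemma rVal_zero {i d t : ℕ} (hi : i < n) (h1 : i + 3 ≤ t) (h2 : t ≤ n + 2) (hd : d = 0) :
    rVal n i d t = t := by
  subst hd
  unfold rVal
  rw [Nat.zero_mul, Nat.add_zero, Nat.mod_eq_of_lt (by omega)]
  omega

lemma rVal_succ {i d t : ℕ} (hi : i < n) :
    rVal n i (d + 1) t = if rVal n i d t = i + 3 then n + 2 else rVal n i d t - 1 := by
  unfold rVal
  set c := n - i with hc
  have hc1 : 1 ≤ c := by omega
  set X := (t - (i + 3)) + d * (c - 1) with hX
  have hsucc : (t - (i + 3)) + (d + 1) * (c - 1) = X + (c - 1) := by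
    rw [hX, Nat.succ_mul]; omega
  rw [hsucc]
  have hmd : (X + (c - 1)) % c = (X % c + (c - 1)) % c := by rw [Nat.mod_add_mod]
  set p := X % c with hp
  have hplt : p < c := Nat.mod_lt _ (by omega)
  by_cases hp0 : p = 0
  · rw [hmd, hp0, Nat.zero_add, Nat.mod_eq_of_lt (by omega), if_pos (by omega)]
    omega
  · have h2 : (p + (c - 1)) % c = p - 1 := by
      rw [Nat.mod_eq_sub_mod (by omega), show p + (c - 1) - c = p - 1 by omega,
        Nat.mod_eq_of_lt (by omega)]
    rw [hmd, h2, if_neg (by omega)]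
    omega

lemma rVal_bounds {i d t : ℕ} (hi : i < n) :
    i + 3 ≤ rVal n i d t ∧ rVal n i d t ≤ n + 2 := by
  unfold rVal
  have := Nat.mod_lt ((t - (i + 3)) + d * (n - i - 1)) (show 0 < n - i by omega)
  omega

lemma rVal_fix_iff {i d t : ℕ} (hi : i < n) (h1 : i + 3 ≤ t) (h2 : t ≤ n + 2) :
    rVal n i d t = t ↔ (n - i) ∣ d := by
  unfold rVal
  set c := n - i with hc
  have hc1 : 1 ≤ c := by omega
  set q := t - (i + 3) with hq
  have hqlt : q < c := by omega
  set r := (d * (c - 1)) % c with hr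
  have hrlt : r < c := Nat.mod_lt _ (by omega)
  have hmd : (q + d * (c - 1)) % c = (q + r) % c := by
    conv_lhs => rw [Nat.add_mod, Nat.mod_eq_of_lt hqlt]
  have key : (q + r) % c = q ↔ r = 0 := by
    constructor
    · intro h
      by_cases hcs : q + r < c
      · rw [Nat.mod_eq_of_lt hcs] at h; omega
      · rw [Nat.mod_eq_sub_mod (by omega), Nat.mod_eq_of_lt (by omega)] at h
        omega
    · intro h
      rw [h, Nat.add_zero, Nat.mod_eq_of_lt hqlt]
  have hco : Nat.Coprime c (c - 1) := by
    have hcc : c - 1 + 1 = c := by omega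
    have h := Nat.coprime_self_add_left (m := c - 1) (n := 1)
    rw [hcc] at h
    exact h.mpr (Nat.coprime_one_left _)
  have hdvd : r = 0 ↔ c ∣ d := by
    rw [hr, ← Nat.dvd_iff_mod_eq_zero]
    constructor
    · intro h
      exact hco.dvd_of_dvd_mul_right h
    · intro h
      exact Dvd.dvd.mul_right h _
  constructor
  · intro h
    have : (q + d * (c - 1)) % c = q := by omega
    rw [hmd] at this
    exact hdvd.mp (key.mp this)
  · intro h
    have : (q + r) % c = q := key.mpr (hdvd.mpr h)
    rw [hmd]
    omega

lemma iter_promK (hn : 1 ≤ n) {L : Zipper n → ℕ} (hL : Good n L) (d : ℕ) :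
    Good n ((promK (n + 2))^[d] L) ∧
    (∀ i : Fin n, (promK (n + 2))^[d] L (yA i) = rVal n (i:ℕ) d (L (yA i))) ∧
    (∀ i : Fin n, (promK (n + 2))^[d] L (yB i) = rVal n (i:ℕ) d (L (yB i))) := by
  induction d with
  | zero =>
    refine ⟨hL, fun i => ?_, fun i => ?_⟩
    · rw [Function.iterate_zero_apply,
        rVal_zero i.isLt (hL.2.2.2.1 i).1 (hL.2.2.2.1 i).2 rfl]
    · rw [Function.iterate_zero_apply,
        rVal_zero i.isLt (hL.2.2.2.2 i).1 (hL.2.2.2.2 i).2 rfl]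
  | succ d ih =>
    obtain ⟨hG, hA, hB⟩ := ih
    rw [Function.iterate_succ_apply']
    have hM : promK (n + 2) ((promK (n + 2))^[d] L) = stepFun n ((promK (n + 2))^[d] L) (n + 1) :=
      promK_good hn hG
    refine ⟨?_, fun i => ?_, fun i => ?_⟩
    · rw [hM]; exact good_stepFun hG (n + 1)
    · rw [hM, stepFun_yA, g_final (hG.2.2.2.1 i).1 (hG.2.2.2.1 i).2, hA i,
        rVal_succ i.isLt]
    · rw [hM, stepFun_yB, g_final (hG.2.2.2.2 i).1 (hG.2.2.2.2 i).2, hB i,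
        rVal_succ i.isLt]

lemma fix_iff (hn : 1 ≤ n) {L : Zipper n → ℕ} (hL : Good n L) (d : ℕ) :
    (promK (n + 2))^[d] L = L ↔ ∀ i : Fin n, (n - (i:ℕ)) ∣ d := by
  obtain ⟨hG, hA, hB⟩ := iter_promK hn hL d
  constructor
  · intro h i
    have hh := hA i
    rw [h] at hh
    exact (rVal_fix_iff i.isLt (hL.2.2.2.1 i).1 (hL.2.2.2.1 i).2).mp hh.symm
  · intro h
    funext z
    rcases zcases z with rfl | ⟨i, rfl⟩ | ⟨i, rfl⟩ | ⟨i, rfl⟩ | ⟨i, rfl⟩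
    · rw [hG.1, hL.1]
    · rw [hG.2.1 i, hL.2.1 i]
    · rw [hA i, (rVal_fix_iff i.isLt (hL.2.2.2.1 i).1 (hL.2.2.2.1 i).2).mpr (h i)]
    · rw [hG.2.2.1 i, hL.2.2.1 i]
    · rw [hB i, (rVal_fix_iff i.isLt (hL.2.2.2.2 i).1 (hL.2.2.2.2 i).2).mpr (h i)]


end ZOS

open ZOS in
/-- Every orbit of `∂_K` on `L_{n+2}(Z_n)` has size
`lcm(1, 2, …, n)`. -/
theorem zipper_orbit_size (n : ℕ) (hn : 1 ≤ n) :
    ∀ L : Zipper n → ℕ, IsPacked (n + 2) L →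
      (promOrbit (n + 2) L).ncard = (Finset.Icc 1 n).lcm id := by
  intro L hP
  classical
  have hL : Good n L := packed_good hn hP
  set F : (Zipper n → ℕ) → (Zipper n → ℕ) := promK (n + 2) with hF
  set ℓ := (Finset.Icc 1 n).lcm id with hℓ
  have hℓpos : 0 < ℓ := by
    rcases Nat.eq_zero_or_pos ℓ with h | h
    · exfalso
      rw [hℓ] at h
      rw [Finset.lcm_eq_zero_iff] at h
      simp only [Set.mem_image, Finset.mem_coe, Finset.mem_Icc, id_eq] at h
      obtain ⟨x, hx, hx0⟩ := h
      omega
    · exact h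
  have hdvdℓ : ∀ i : Fin n, (n - (i:ℕ)) ∣ ℓ := by
    intro i
    have hmem : n - (i:ℕ) ∈ Finset.Icc 1 n := by
      rw [Finset.mem_Icc]
      have := i.isLt
      omega
    exact Finset.dvd_lcm hmem
  have hmin : ∀ d : ℕ, (∀ i : Fin n, (n - (i:ℕ)) ∣ d) → ℓ ∣ d := by
    intro d h
    apply Finset.lcm_dvd
    intro c hc
    rw [Finset.mem_Icc] at hc
    have h2 : (n - (n - c)) ∣ d := h ⟨n - c, by omega⟩
    rw [show n - (n - c) = c by omega] at h2
    exact h2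
  have hfix : ∀ M : Zipper n → ℕ, Good n M → F^[ℓ] M = M := by
    intro M hM
    exact (fix_iff hn hM ℓ).mpr hdvdℓ
  have horb : promOrbit (n + 2) L = ↑((Finset.range ℓ).image (fun j => F^[j] L)) := by
    ext M
    simp only [promOrbit, Set.mem_setOf_eq, Finset.coe_image, Set.mem_image,
      Finset.mem_coe, Finset.mem_range]
    constructor
    · rintro ⟨j, rfl⟩
      refine ⟨j % ℓ, Nat.mod_lt _ hℓpos, ?_⟩
      have h1 : F^[ℓ * (j / ℓ)] L = L := by
        rw [Function.iterate_mul]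
        exact Function.iterate_fixed (hfix L hL) (j / ℓ)
      have h2 : F^[j % ℓ + ℓ * (j / ℓ)] L = F^[j % ℓ] (F^[ℓ * (j / ℓ)] L) :=
        Function.iterate_add_apply F _ _ L
      rw [h1] at h2
      rw [← h2, Nat.mod_add_div j ℓ]
    · rintro ⟨j, hj, rfl⟩
      exact ⟨j, rfl⟩
  have key : ∀ a b : ℕ, a < b → b < ℓ → F^[a] L = F^[b] L → False := by
    intro a b hlt hbℓ heq
    have hGa : Good n (F^[a] L) := (iter_promK hn hL a).1
    have h1 : F^[b - a] (F^[a] L) = F^[a] L := by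
      rw [← Function.iterate_add_apply, show b - a + a = b by omega, ← heq]
    have h2 : ℓ ∣ (b - a) := hmin _ ((fix_iff hn hGa (b - a)).mp h1)
    have h3 : ℓ ≤ b - a := Nat.le_of_dvd (by omega) h2
    omega
  have hinj : Set.InjOn (fun j => F^[j] L) ↑(Finset.range ℓ) := by
    intro a ha b hb hab
    simp only [Finset.coe_range, Set.mem_Iio] at ha hb
    by_contra hne
    rcases Nat.lt_trichotomy a b with h | h | h
    · exact key a b h hb hab
    · exact hne h
    · exact key b a h ha hab.symm
  rw [horb, Set.ncard_coe_finset, Finset.card_image_of_injOn hinj, Finset.card_range]
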